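/- Let α be irrational, f : ℝ/ℤ → ℝ absolutely continuous with ∫ f = 1, and set f_0 = f − 1. Suppose (q_{n_k}) is a subsequence of the denominators of α with ∑_k ‖f_0^{(q_{n_k})}‖_∞ < ∞ and ∑_k ‖q_{n_k}α‖ < ∞, and let β = ∑_k q_{n_k}α mod 1. Then the function g(x) = ∑_{k≥1} f_0^{(q_{n_k})}(x + β_k), where β_k = ∑_{j<k} q_{n_j}α, converges uniformly and satisfies f(x+β) − f(x) = g(x+α) − g(x) for all x. -/

import Mathlib

/-!
Along the orbit of `x + β_k`, the Birkhoff sum `f₀^{(q)}` is a discrete primitive: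
`f₀^{(q)}(y + α) - f₀^{(q)}(y) = f₀(y + qα) - f₀(y)`, and by periodicity `qα` may be replaced by
`qα - round(qα)`, which moves `x + β_k` to `x + β_{k+1}`. Hence the `k`-th term of `g(x + α) - g(x)`
is `f(x + β_{k+1}) - f(x + β_k)`; the uniform bounds make every series absolutely convergent, and the
telescoping sum tends to `f(x + β) - f(x)` because `f` is continuous and `β_k → β`.
-/

open MeasureTheory Filter

noncomputable def distInt (x : ℝ) : ℝ := ⨅ m : ℤ, |x - m|

open Topology Finset

lemma distInt_eq_abs_sub_round (x : ℝ) : distInt x = |x - round x| :=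
  le_antisymm (ciInf_le ⟨0, by rintro _ ⟨m, rfl⟩; positivity⟩ (round x))
    (le_ciInf (round_le x))

lemma continuous_of_eq_add_integral {f f' : ℝ → ℝ} {a c : ℝ}
    (hf' : ∀ u v : ℝ, IntervalIntegrable f' volume u v)
    (hf : ∀ x, f x = c + ∫ t in a..x, f' t) : Continuous f := by
  rw [funext hf]
  exact continuous_const.add (intervalIntegral.continuous_primitive hf' a)

lemma sum_range_add_sub_sum_range {R G : Type*} [CommRing R] [AddCommGroup G] (φ : R → G)
    (α y : R) (n : ℕ) :
    ∑ j ∈ range n, φ (y + α + j * α) - ∑ j ∈ range n, φ (y + j * α) = φ (y + n * α) - φ y := by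
  rw [← sum_sub_distrib]
  convert sum_range_sub (fun j : ℕ => φ (y + j * α)) n using 3 with j
  · push_cast; ring_nf
  · simp

lemma Function.Periodic.sum_range_add_sub_sum_range {G : Type*} [AddCommGroup G] {φ : ℝ → G}
    (hφ : Function.Periodic φ 1) (α y : ℝ) (n : ℕ) :
    ∑ j ∈ range n, φ (y + α + j * α) - ∑ j ∈ range n, φ (y + j * α) =
      φ (y + (n * α - round (n * α))) - φ y := by
  have hround := hφ.sub_int_mul_eq (x := y + n * α) (round (n * α))
  rw [mul_one] at hround
  rw [_root_.sum_range_add_sub_sum_range, ← add_sub_assoc, hround]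

lemma Summable.hasSum_sub_of_tendsto {G : Type*} [AddCommGroup G] [TopologicalSpace G]
    [IsTopologicalAddGroup G] [T2Space G] {v : ℕ → G} {L : G}
    (hs : Summable fun n => v (n + 1) - v n) (hv : Tendsto v atTop (𝓝 L)) :
    HasSum (fun n => v (n + 1) - v n) (L - v 0) := by
  convert hs.hasSum
  refine tendsto_nhds_unique ((hv.sub_const (v 0)).congr fun N => ?_) hs.hasSum.tendsto_sum_nat
  exact (sum_range_sub v N).symm

theorem exists_transfer_function_of_AC_general (α : ℝ)
    (f : ℝ → ℝ) (hper : ∀ x, f (x + 1) = f x)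
    (hAC : ∃ f' : ℝ → ℝ, (∀ a b : ℝ, IntervalIntegrable f' volume a b) ∧
      ∀ x, f x = f 0 + ∫ t in (0 : ℝ)..x, f' t)
    (qs : ℕ → ℕ)
    (C : ℕ → ℝ) (hCsum : Summable C)
    (hCbound : ∀ (k : ℕ) (x : ℝ),
      |∑ j ∈ Finset.range (qs k), (f (x + (j : ℝ) * α) - 1)| ≤ C k)
    (hαsum : Summable fun k => distInt ((qs k : ℝ) * α))
    (β : ℝ)
    (hβ : β = ∑' k : ℕ, ((qs k : ℝ) * α - (round ((qs k : ℝ) * α) : ℝ))) :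
    ∃ g : ℝ → ℝ,
      TendstoUniformly
        (fun N x => ∑ k ∈ Finset.range N,
          ∑ j ∈ Finset.range (qs k),
            (f (x + (∑ i ∈ Finset.range k,
                ((qs i : ℝ) * α - (round ((qs i : ℝ) * α) : ℝ))) + (j : ℝ) * α) - 1))
        g atTop ∧
      ∀ x : ℝ, f (x + β) - f x = g (x + α) - g x := by
  obtain ⟨f', hf'int, hf'repr⟩ := hAC
  have hf : Continuous f := continuous_of_eq_add_integral hf'int hf'repr
  have hf₀ : Function.Periodic (fun y => f y - 1) 1 := fun y => by simp only [hper]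
  set θ : ℕ → ℝ := fun k => (qs k : ℝ) * α - round ((qs k : ℝ) * α)
  set b : ℕ → ℝ := fun k => ∑ i ∈ range k, θ i
  have hθ : Summable θ :=
    summable_abs_iff.mp (by simpa only [distInt_eq_abs_sub_round] using hαsum)
  set F : ℕ → ℝ → ℝ := fun k x => ∑ j ∈ range (qs k), (f (x + b k + j * α) - 1)
  have hF : ∀ k x, ‖F k x‖ ≤ C k := fun k x => hCbound k (x + b k)
  have hFsum : ∀ x, Summable fun k => F k x := fun x => .of_norm_bounded hCsum (hF · x)
  refine ⟨fun x => ∑' k, F k x, tendstoUniformly_tsum_nat hCsum hF, fun x => ?_⟩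
  have hstep : ∀ k, F k (x + α) - F k x = f (x + b (k + 1)) - f (x + b k) := fun k => by
    have := hf₀.sum_range_add_sub_sum_range α (x + b k) (qs k)
    simp only [F, add_right_comm x α, b, sum_range_succ, ← add_assoc] at this ⊢
    rw [this]
    ring
  have hlim : Tendsto (fun N => f (x + b N)) atTop (𝓝 (f (x + β))) :=
    (hf.tendsto _).comp (tendsto_const_nhds.add (by rw [hβ]; exact hθ.hasSum.tendsto_sum_nat))
  have hdiff : Summable fun k => f (x + b (k + 1)) - f (x + b k) :=
    ((hFsum (x + α)).sub (hFsum x)).congr hstep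
  calc f (x + β) - f x = ∑' k, (f (x + b (k + 1)) - f (x + b k)) := by
        rw [(hdiff.hasSum_sub_of_tendsto (v := fun N => f (x + b N)) hlim).tsum_eq]
        simp [b]
    _ = ∑' k, (F k (x + α) - F k x) := tsum_congr fun k => (hstep k).symm
    _ = ∑' k, F k (x + α) - ∑' k, F k x := (hFsum (x + α)).tsum_sub (hFsum x)

/-- Construction of solutions of the cohomological equation for translates:
if `f` is 1-periodic, absolutely continuous with `∫₀¹ f = 1`, `f₀ = f - 1`, and
`(q_{n_k})` is a subsequence of the denominators of the irrational `α` with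
`∑_k ‖f₀^{(q_{n_k})}‖_∞ < ∞` and `∑_k ‖q_{n_k} α‖ < ∞`, then with
`β = ∑_k q_{n_k} α (mod 1)` and `β_k = ∑_{j<k} q_{n_j} α (mod 1)`, the series
`g(x) = ∑_k f₀^{(q_{n_k})}(x + β_k)` converges uniformly and satisfies
`f(x+β) - f(x) = g(x+α) - g(x)` for all `x`. -/
theorem exists_transfer_function_of_AC (α : ℝ) (hα : Irrational α)
    (f : ℝ → ℝ) (hper : ∀ x, f (x + 1) = f x)
    (hAC : ∃ f' : ℝ → ℝ, (∀ a b : ℝ, IntervalIntegrable f' volume a b) ∧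
      ∀ x, f x = f 0 + ∫ t in (0 : ℝ)..x, f' t)
    (hint : (∫ x in (0 : ℝ)..1, f x) = 1)
    (qs : ℕ → ℕ) (hqs : StrictMono qs)
    (hden : ∀ k, ∃ n, (qs k : ℝ) = (GenContFract.of α).dens n)
    (C : ℕ → ℝ) (hCsum : Summable C)
    (hCbound : ∀ (k : ℕ) (x : ℝ),
      |∑ j ∈ Finset.range (qs k), (f (x + (j : ℝ) * α) - 1)| ≤ C k)
    (hαsum : Summable fun k => distInt ((qs k : ℝ) * α))
    (β : ℝ)
    (hβ : β = ∑' k : ℕ, ((qs k : ℝ) * α - (round ((qs k : ℝ) * α) : ℝ))) :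
    ∃ g : ℝ → ℝ,
      TendstoUniformly
        (fun N x => ∑ k ∈ Finset.range N,
          ∑ j ∈ Finset.range (qs k),
            (f (x + (∑ i ∈ Finset.range k,
                ((qs i : ℝ) * α - (round ((qs i : ℝ) * α) : ℝ))) + (j : ℝ) * α) - 1))
        g atTop ∧
      ∀ x : ℝ, f (x + β) - f x = g (x + α) - g x :=
  exists_transfer_function_of_AC_general α f hper hAC qs C hCsum hCbound hαsum β hβ
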